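/- Let A be Metzler and J nonnegative, both n×n. If there exists λ ∈ ℝ^n strictly positive with λᵀA < 0 and λᵀ(J − I) < 0 (componentwise), then for every T > 0 the matrix J·exp(A·T) has spectral radius strictly less than 1. -/

import Mathlib

/-!
The positive vector `l` is a linear copositive Lyapunov function for both the flow and the jumps.
Shifting the Metzler matrix `A` by a multiple of the identity makes it nonnegative, so comparing
exponential series termwise shows that `exp (T A)` is entrywise nonnegative and that
`lᵀ exp (T A) ≤ lᵀ`. By finiteness `lᵀ J ≤ ρ lᵀ` for some `ρ < 1`, hence the nonnegative matrix
`M = J exp (T A)` satisfies `lᵀ M ≤ ρ lᵀ`. If `M v = μ v` with `v ≠ 0`, then `|μ| |v| ≤ M |v|`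
entrywise, and pairing with `l` gives `|μ| lᵀ|v| ≤ ρ lᵀ|v|` with `lᵀ|v| > 0`.
-/

open Matrix NormedSpace
open scoped Nat

theorem HasSum.matrix_vecMul {ι m n R : Type*} [Fintype m] [NonUnitalNonAssocSemiring R]
    [TopologicalSpace R] [IsTopologicalSemiring R] {f : ι → Matrix m n R} {a : Matrix m n R}
    (hf : HasSum f a) (v : m → R) : HasSum (fun k => v ᵥ* f k) (v ᵥ* a) :=
  hf.map (⟨⟨(v ᵥ* ·), vecMul_zero v⟩, (vecMul_add · · v)⟩ : Matrix m n R →+ n → R)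
    (continuous_const.matrix_vecMul continuous_id)

theorem exists_nonneg_lt_one_le_smul_of_lt {ι : Type*} [Finite ι] {x l : ι → ℝ}
    (hl : ∀ i, 0 < l i) (hx : ∀ i, x i < l i) : ∃ ρ : ℝ, 0 ≤ ρ ∧ ρ < 1 ∧ x ≤ ρ • l := by
  cases isEmpty_or_nonempty ι
  · exact ⟨0, le_rfl, one_pos, isEmptyElim⟩
  obtain ⟨j, hj⟩ := Finite.exists_max fun i => x i / l i
  refine ⟨max (x j / l j) 0, le_max_right _ _,
    max_lt ((div_lt_one (hl j)).2 (hx j)) one_pos, fun i => ?_⟩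
  exact (div_le_iff₀ (hl i)).1 ((hj i).trans (le_max_left _ _))

namespace Matrix

variable {ι : Type*}

def IsMetzler (A : Matrix ι ι ℝ) : Prop :=
  Pairwise fun i j => 0 ≤ A i j

theorem IsMetzler.smul {A : Matrix ι ι ℝ} (hA : A.IsMetzler) {t : ℝ} (ht : 0 ≤ t) :
    (t • A).IsMetzler :=
  fun _ _ hij => mul_nonneg ht (hA hij)

variable [Fintype ι]

section Nonneg

variable {R : Type*} [Semiring R] [PartialOrder R] [IsOrderedRing R]

theorem mul_apply_nonneg {m n : Type*} {M : Matrix m ι R} {N : Matrix ι n R}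
    (hM : ∀ i j, 0 ≤ M i j) (hN : ∀ i j, 0 ≤ N i j) (i : m) (j : n) : 0 ≤ (M * N) i j :=
  Finset.sum_nonneg fun k _ => mul_nonneg (hM i k) (hN k j)

theorem vecMul_le_vecMul_of_nonneg {n : Type*} {x y : ι → R} (hxy : x ≤ y) {M : Matrix ι n R}
    (hM : ∀ i j, 0 ≤ M i j) : x ᵥ* M ≤ y ᵥ* M :=
  fun j => dotProduct_le_dotProduct_of_nonneg_right hxy fun i => hM i j

end Nonneg

theorem norm_smul_le_mulVec_norm {𝕜 : Type*} [RCLike 𝕜] {M : Matrix ι ι ℝ}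
    (hM : ∀ i j, 0 ≤ M i j) {v : ι → 𝕜} {μ : 𝕜} (hv : M.map (algebraMap ℝ 𝕜) *ᵥ v = μ • v)
    (i : ι) : ‖μ‖ * ‖v i‖ ≤ (M *ᵥ fun j => ‖v j‖) i :=
  calc ‖μ‖ * ‖v i‖ = ‖∑ j, (M i j : 𝕜) * v j‖ := by
        rw [← norm_mul, ← smul_eq_mul, ← Pi.smul_apply, ← hv]; rfl
    _ ≤ ∑ j, ‖(M i j : 𝕜) * v j‖ := norm_sum_le _ _
    _ = (M *ᵥ fun j => ‖v j‖) i := by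
        simp [mulVec, dotProduct, abs_of_nonneg (hM _ _)]

variable [DecidableEq ι]

theorem vecMul_pow_le_pow_smul {B : Matrix ι ι ℝ} (hB : ∀ i j, 0 ≤ B i j) {l : ι → ℝ} {c : ℝ}
    (hc : 0 ≤ c) (hl : l ᵥ* B ≤ c • l) (k : ℕ) : l ᵥ* (B ^ k) ≤ c ^ k • l := by
  induction k with
  | zero => simp
  | succ k ih =>
    calc l ᵥ* (B ^ (k + 1)) = (l ᵥ* (B ^ k)) ᵥ* B := by rw [pow_succ, vecMul_vecMul]
      _ ≤ (c ^ k • l) ᵥ* B := vecMul_le_vecMul_of_nonneg ih hB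
      _ = c ^ k • l ᵥ* B := smul_vecMul _ _ _
      _ ≤ c ^ k • c • l := smul_le_smul_of_nonneg_left hl (pow_nonneg hc k)
      _ = c ^ (k + 1) • l := by rw [smul_smul, pow_succ]

section Exponential

attribute [local instance] Matrix.linftyOpNormedRing Matrix.linftyOpNormedAlgebra

theorem exp_apply_nonneg_of_nonneg {B : Matrix ι ι ℝ} (hB : ∀ i j, 0 ≤ B i j) (i j : ι) :
    0 ≤ exp B i j :=
  (Pi.hasSum.1 (Pi.hasSum.1 (exp_series_hasSum_exp' (𝕂 := ℝ) B) i) j).nonneg fun k =>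
    mul_nonneg (by positivity) (pow_apply_nonneg hB k i j)

theorem vecMul_exp_le_of_nonneg {B : Matrix ι ι ℝ} (hB : ∀ i j, 0 ≤ B i j) {l : ι → ℝ} {c : ℝ}
    (hc : 0 ≤ c) (hl : l ᵥ* B ≤ c • l) : l ᵥ* exp B ≤ Real.exp c • l := by
  have hexpB := (exp_series_hasSum_exp' (𝕂 := ℝ) B).matrix_vecMul l
  have hexpc : HasSum (fun k => ((k ! : ℝ)⁻¹ • c ^ k) • l) (Real.exp c • l) := by
    rw [Real.exp_eq_exp_ℝ]
    exact (exp_series_hasSum_exp' c).smul_const l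
  refine hasSum_le (fun k => ?_) hexpB hexpc
  rw [vecMul_smul, smul_assoc]
  exact smul_le_smul_of_nonneg_left (vecMul_pow_le_pow_smul hB hc hl k) (by positivity)

end Exponential

theorem exp_add_smul_one (A : Matrix ι ι ℝ) (c : ℝ) : exp (A + c • 1) = Real.exp c • exp A := by
  have hc : exp (c • 1 : Matrix ι ι ℝ) = Real.exp c • 1 := by
    rw [smul_one_eq_diagonal, exp_diagonal, Pi.exp_def, ← Real.exp_eq_exp_ℝ, smul_one_eq_diagonal]
  rw [exp_add_of_commute _ _ ((Commute.one_right A).smul_right c), hc, mul_smul_one]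

namespace IsMetzler

variable {A : Matrix ι ι ℝ}

theorem exists_nonneg_add_smul_one (hA : A.IsMetzler) :
    ∃ c : ℝ, 0 ≤ c ∧ ∀ i j, 0 ≤ (A + c • 1) i j := by
  obtain ⟨c, hc⟩ := Finite.exists_le fun i => -A i i
  refine ⟨max c 0, le_max_right _ _, fun i j => ?_⟩
  rcases eq_or_ne i j with rfl | hij
  · simp only [add_apply, smul_apply, one_apply_eq, smul_eq_mul, mul_one]
    linarith [hc i, le_max_left c 0]
  · simpa [hij] using hA hij

theorem exp_apply_nonneg (hA : A.IsMetzler) (i j : ι) : 0 ≤ exp A i j := by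
  obtain ⟨c, -, hB⟩ := hA.exists_nonneg_add_smul_one
  have h := exp_apply_nonneg_of_nonneg hB i j
  rw [exp_add_smul_one, smul_apply, smul_eq_mul] at h
  exact (mul_nonneg_iff_of_pos_left (Real.exp_pos c)).1 h

theorem vecMul_exp_le (hA : A.IsMetzler) {l : ι → ℝ} (hl : l ᵥ* A ≤ 0) : l ᵥ* exp A ≤ l := by
  obtain ⟨c, hc, hB⟩ := hA.exists_nonneg_add_smul_one
  have hlB : l ᵥ* (A + c • 1) ≤ c • l := by
    rw [vecMul_add, vecMul_smul, vecMul_one]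
    exact add_le_of_nonpos_left hl
  have h := vecMul_exp_le_of_nonneg hB hc hlB
  rw [exp_add_smul_one, vecMul_smul] at h
  exact (smul_le_smul_iff_of_pos_left (Real.exp_pos c)).1 h

end IsMetzler

theorem exists_mulVec_eq_smul_of_mem_spectrum {K : Type*} [Field K] {M : Matrix ι ι K} {μ : K}
    (h : μ ∈ spectrum K M) : ∃ v ≠ 0, M *ᵥ v = μ • v := by
  rw [← spectrum_toLin'] at h
  obtain ⟨v, hv⟩ := (Module.End.hasEigenvalue_iff_mem_spectrum.2 h).exists_hasEigenvector
  exact ⟨v, hv.2, by simpa using hv.apply_eq_smul⟩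

theorem norm_le_of_mem_spectrum_of_vecMul_le {𝕜 : Type*} [RCLike 𝕜] {M : Matrix ι ι ℝ}
    (hM : ∀ i j, 0 ≤ M i j) {l : ι → ℝ} (hl : ∀ i, 0 < l i) {ρ : ℝ} (hlM : l ᵥ* M ≤ ρ • l)
    {μ : 𝕜} (hμ : μ ∈ spectrum 𝕜 (M.map (algebraMap ℝ 𝕜))) : ‖μ‖ ≤ ρ := by
  obtain ⟨v, hv0, hv⟩ := exists_mulVec_eq_smul_of_mem_spectrum hμ
  set a : ι → ℝ := fun j => ‖v j‖
  have ha : 0 ≤ a := fun j => norm_nonneg _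
  have hla : 0 < l ⬝ᵥ a := by
    obtain ⟨i, hi⟩ := Function.ne_iff.1 hv0
    exact Finset.sum_pos' (fun j _ => mul_nonneg (hl j).le (ha j))
      ⟨i, Finset.mem_univ i, mul_pos (hl i) (norm_pos_iff.2 hi)⟩
  refine le_of_mul_le_mul_right ?_ hla
  calc ‖μ‖ * (l ⬝ᵥ a) = l ⬝ᵥ (‖μ‖ • a) := by rw [dotProduct_smul, smul_eq_mul]
    _ ≤ l ⬝ᵥ (M *ᵥ a) :=
        dotProduct_le_dotProduct_of_nonneg_left (norm_smul_le_mulVec_norm hM hv) fun i =>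
          (hl i).le
    _ = (l ᵥ* M) ⬝ᵥ a := dotProduct_mulVec _ _ _
    _ ≤ (ρ • l) ⬝ᵥ a := dotProduct_le_dotProduct_of_nonneg_right hlM ha
    _ = ρ * (l ⬝ᵥ a) := smul_dotProduct _ _ _

end Matrix

/-- Stability under arbitrary dwell-time implies Schur stability of `J exp(AT)` for
every `T > 0`. -/
theorem arbitrary_dwell_time_schur (n : ℕ) (A J : Matrix (Fin n) (Fin n) ℝ)
    (hA : ∀ i j, i ≠ j → 0 ≤ A i j) (hJ : ∀ i j, 0 ≤ J i j)
    (l : Fin n → ℝ) (hl : ∀ i, 0 < l i)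
    (hflow : ∀ j, Matrix.vecMul l A j < 0)
    (hjump : ∀ j, Matrix.vecMul l (J - 1) j < 0) :
    ∀ T : ℝ, 0 < T →
      ∀ μ ∈ spectrum ℂ ((J * exp (T • A)).map (algebraMap ℝ ℂ)),
        ‖μ‖ < 1 := by
  intro T hT μ hμ
  have hTA : (T • A).IsMetzler := IsMetzler.smul (fun i j => hA i j) hT.le
  have hlTA : l ᵥ* (T • A) ≤ 0 := by
    rw [vecMul_smul]
    exact smul_nonpos_of_nonneg_of_nonpos hT.le fun j => (hflow j).le
  have hlJ : ∀ j, (l ᵥ* J) j < l j := fun j => by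
    simpa [vecMul_sub, vecMul_one] using hjump j
  obtain ⟨ρ, hρ0, hρ1, hlJρ⟩ := exists_nonneg_lt_one_le_smul_of_lt hl hlJ
  have hlM : l ᵥ* (J * exp (T • A)) ≤ ρ • l :=
    calc l ᵥ* (J * exp (T • A)) = (l ᵥ* J) ᵥ* exp (T • A) := (vecMul_vecMul _ _ _).symm
      _ ≤ (ρ • l) ᵥ* exp (T • A) := vecMul_le_vecMul_of_nonneg hlJρ hTA.exp_apply_nonneg
      _ = ρ • l ᵥ* exp (T • A) := smul_vecMul _ _ _
      _ ≤ ρ • l := smul_le_smul_of_nonneg_left (hTA.vecMul_exp_le hlTA) hρ0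
  exact (norm_le_of_mem_spectrum_of_vecMul_le (mul_apply_nonneg hJ hTA.exp_apply_nonneg) hl hlM
    hμ).trans_lt hρ1
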